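/- The element λ₀ := (1+K)·ρ is a two-sided integral in the Hopf algebra 𝒩: for every x ∈ 𝒩, x·λ₀ = λ₀·x = ε(x)·λ₀; moreover μ₀(λ₀) = 1. -/

import Mathlib

noncomputable section

open TensorProduct

/-- The quadratic form `q(x₀,x₁,x₂) = x₀²` on `ℝ³`. -/
def Nform : QuadraticForm ℝ (Fin 3 → ℝ) :=
  QuadraticMap.weightedSumSquares ℝ (fun i : Fin 3 => if i = 0 then (1 : ℝ) else 0)

/-- The algebra `𝒩 = ℤ/2 ⋉ Λ*ℝ²`, realized as the Clifford algebra of `Nform`. -/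
abbrev NA := CliffordAlgebra Nform

/-- The generator `K`. -/
def K : NA := CliffordAlgebra.ι Nform (Pi.single 0 1)

/-- The generator `θ`. -/
def θ : NA := CliffordAlgebra.ι Nform (Pi.single 1 1)

/-- The generator `θ̄`. -/
def θb : NA := CliffordAlgebra.ι Nform (Pi.single 2 1)

/-- `ρ := θ̄θ`. -/
def ρ : NA := θb * θ

lemma hK2 : K * K = 1 := by
  rw [K, CliffordAlgebra.ι_sq_scalar]
  simp [Nform, QuadraticMap.weightedSumSquares_apply, Fin.sum_univ_three]
  exact RingHom.map_one _

lemma hθ2 : θ * θ = 0 := by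
  rw [θ, CliffordAlgebra.ι_sq_scalar]
  simp [Nform, QuadraticMap.weightedSumSquares_apply, Fin.sum_univ_three]
  exact RingHom.map_zero _

lemma hθb2 : θb * θb = 0 := by
  rw [θb, CliffordAlgebra.ι_sq_scalar]
  simp [Nform, QuadraticMap.weightedSumSquares_apply, Fin.sum_univ_three]
  exact RingHom.map_zero _

lemma anticomm (i j : Fin 3) (h : i ≠ j) :
    CliffordAlgebra.ι Nform (Pi.single i 1) * CliffordAlgebra.ι Nform (Pi.single j 1)
      = - (CliffordAlgebra.ι Nform (Pi.single j 1) * CliffordAlgebra.ι Nform (Pi.single i 1)) := by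
  have := CliffordAlgebra.ι_mul_ι_add_swap (Q := Nform) (Pi.single i 1) (Pi.single j 1)
  have hp : QuadraticMap.polar Nform (Pi.single i 1) (Pi.single j 1) = 0 := by
    rw [QuadraticMap.polar]
    simp [Nform, QuadraticMap.weightedSumSquares_apply, Fin.sum_univ_three]
    fin_cases i <;> fin_cases j <;> simp_all <;> ring
  rw [hp] at this
  simp at this
  linear_combination (norm := noncomm_ring) this

lemma hθK : θ * K = - (K * θ) := anticomm 1 0 (by decide)
lemma hθbK : θb * K = - (K * θb) := anticomm 2 0 (by decide)
lemma hθθb : θ * θb = - (θb * θ) := anticomm 1 2 (by decide)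

lemma thρ : θ * ρ = 0 := by
  rw [ρ, ← mul_assoc, hθθb, neg_mul, mul_assoc, hθ2, mul_zero, neg_zero]

lemma thbρ : θb * ρ = 0 := by
  rw [ρ, ← mul_assoc, hθb2, zero_mul]

lemma ρth : ρ * θ = 0 := by
  rw [ρ, mul_assoc, hθ2, mul_zero]

lemma ρthb : ρ * θb = 0 := by
  rw [ρ, mul_assoc, hθθb, mul_neg, ← mul_assoc, hθb2, zero_mul, neg_zero]

lemma ρK : ρ * K = K * ρ := by
  rw [ρ, mul_assoc, hθK, mul_neg, ← mul_assoc, hθbK, neg_mul, neg_neg, mul_assoc]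

lemma ιdecomp (m : Fin 3 → ℝ) :
    CliffordAlgebra.ι Nform m = m 0 • K + m 1 • θ + m 2 • θb := by
  have hm : m = m 0 • (Pi.single 0 1 : Fin 3 → ℝ) + m 1 • (Pi.single 1 1 : Fin 3 → ℝ)
      + m 2 • (Pi.single 2 1 : Fin 3 → ℝ) := by
    funext i; fin_cases i <;> simp
  rw [K, θ, θb, ← map_smul, ← map_smul, ← map_smul, ← map_add, ← map_add, ← hm]


/-- the element `λ₀ := (1+K)·ρ` is a two-sided integral in the Hopf algebra
`𝒩`: for every `x ∈ 𝒩`, `x·λ₀ = λ₀·x = ε(x)·λ₀`; moreover `μ₀(λ₀) = 1`.  Here `ε` is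
the counit of `𝒩`, i.e. the (unique) algebra homomorphism `𝒩 → ℝ` with `ε(K) = 1`,
`ε(θ) = ε(θ̄) = 0`, and `μ₀` is the linear functional with `μ₀(ρ) = 1` and `μ₀ = 0` on
the other seven basis monomials. -/
theorem stmt3
    (ε : NA →ₐ[ℝ] ℝ) (hεK : ε K = 1) (hεθ : ε θ = 0) (hεθb : ε θb = 0)
    (μ₀ : NA →ₗ[ℝ] ℝ)
    (hμ1 : μ₀ 1 = 0) (hμθ : μ₀ θ = 0) (hμθb : μ₀ θb = 0) (hμρ : μ₀ ρ = 1)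
    (hμK : μ₀ K = 0) (hμKθ : μ₀ (K * θ) = 0) (hμKθb : μ₀ (K * θb) = 0)
    (hμKρ : μ₀ (K * ρ) = 0) :
    (∀ x : NA, x * ((1 + K) * ρ) = ε x • ((1 + K) * ρ) ∧
      (1 + K) * ρ * x = ε x • ((1 + K) * ρ)) ∧
    μ₀ ((1 + K) * ρ) = 1 := by
  set l : NA := (1 + K) * ρ with hl
  have hKl : K * l = l := by
    rw [hl, show K * ((1 + K) * ρ) = K * ρ + K * K * ρ from by noncomm_ring, hK2]
    noncomm_ring
  have hθl : θ * l = 0 := by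
    rw [hl, show θ * ((1 + K) * ρ) = θ * ρ + (θ * K) * ρ from by noncomm_ring, hθK, thρ,
      neg_mul, mul_assoc, thρ, mul_zero, neg_zero, add_zero]
  have hθbl : θb * l = 0 := by
    rw [hl, show θb * ((1 + K) * ρ) = θb * ρ + (θb * K) * ρ from by noncomm_ring, hθbK, thbρ,
      neg_mul, mul_assoc, thbρ, mul_zero, neg_zero, add_zero]
  have hlK : l * K = l := by
    rw [hl, show (1 + K) * ρ * K = ρ * K + K * (ρ * K) from by noncomm_ring, ρK,
      ← mul_assoc, hK2]
    noncomm_ring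
  have hlθ : l * θ = 0 := by
    rw [hl, mul_assoc, ρth, mul_zero]
  have hlθb : l * θb = 0 := by
    rw [hl, mul_assoc, ρthb, mul_zero]
  refine ⟨fun x => ?_, ?_⟩
  · induction x using CliffordAlgebra.induction with
    | algebraMap r =>
      constructor <;> simp [Algebra.smul_def, Algebra.commutes, mul_assoc]
    | ι m =>
      rw [ιdecomp m]
      constructor
      · rw [add_mul, add_mul, smul_mul_assoc, smul_mul_assoc, smul_mul_assoc,
          hKl, hθl, hθbl, smul_zero, smul_zero, add_zero, add_zero]
        simp [hεK, hεθ, hεθb]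
      · rw [mul_add, mul_add, mul_smul_comm, mul_smul_comm, mul_smul_comm,
          hlK, hlθ, hlθb, smul_zero, smul_zero, add_zero, add_zero]
        simp [hεK, hεθ, hεθb]
    | mul a b ha hb =>
      obtain ⟨ha1, ha2⟩ := ha
      obtain ⟨hb1, hb2⟩ := hb
      constructor
      · rw [mul_assoc, hb1, mul_smul_comm, ha1, map_mul, smul_smul, mul_comm]
      · rw [← mul_assoc, mul_assoc l a b, ← mul_assoc]
        rw [ha2, smul_mul_assoc, hb2, map_mul, smul_smul, mul_comm]
    | add a b ha hb =>
      obtain ⟨ha1, ha2⟩ := ha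
      obtain ⟨hb1, hb2⟩ := hb
      constructor
      · rw [add_mul, ha1, hb1, map_add, add_smul]
      · rw [mul_add, ha2, hb2, map_add, add_smul]
  · rw [hl, add_mul, one_mul, map_add, hμρ, hμKρ, add_zero]
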